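/- Let 0 < α < 1, L(t,x,v) a C^2 Lagrangian, and suppose the fractional functional ∫_a^b L(t, x(t), ᶜD^α_{a+}x(t)) dt is invariant under a one-parameter group φ_s acting on x only. Then for every solution x of the fractional Euler–Lagrange equation D^α_{b-}(∂_v L(★)) + ∂_x L(★) = 0 with ★ = (t, x(t), ᶜD^α_{a+}x(t)), the identity ∂_v L(★) · ᶜD^α_{a+}( (d/ds φ_s(x))|_{s=0} )(t) − D^α_{b-}(∂_v L(★))(t) · (d/ds φ_s(x)(t))|_{s=0} = 0 holds for all t ∈ [a,b]. -/

import Mathlib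

open MeasureTheory intervalIntegral

/-- Left Caputo fractional derivative of order `α ∈ (0,1)` of a vector-valued
function. -/
noncomputable def caputoDeriv {F : Type*} [NormedAddCommGroup F] [NormedSpace ℝ F]
    (α a : ℝ) (f : ℝ → F) (t : ℝ) : F :=
  (Real.Gamma (1 - α))⁻¹ • ∫ s in a..t, ((t - s) ^ (-α : ℝ)) • deriv f s

/-- Right Riemann–Liouville fractional derivative of order `α ∈ (0,1)` of a
vector-valued function: `D^α_{b-} f = -(d/dt) I^{1-α}_{b-} f`. -/
noncomputable def rlDerivR {F : Type*} [NormedAddCommGroup F] [NormedSpace ℝ F]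
    (α b : ℝ) (f : ℝ → F) (t : ℝ) : F :=
  -((Real.Gamma (1 - α))⁻¹ •
      deriv (fun u => ∫ s in u..b, ((s - u) ^ (-α : ℝ)) • f s) t)

/-!
Both integrands in the invariance hypothesis are continuous in `t`: the substitution
`v = (t - σ) ^ (1 - α)` turns `∫ σ in a..t, (t - σ) ^ (-α) • g σ` into `(1 - α)⁻¹` times the
integral of a continuous function over `[0, (t - a) ^ (1 - α)]`. Equality of their primitives
therefore forces `L (t, φ_s (x t), ᶜD^α (φ_s ∘ x) t) = L (t, x t, ᶜD^α x t)` for every `s`.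
The same substitution lets `d/ds` pass through `ᶜD^α`, and symmetry of the second derivative of
`φ` identifies the result with `ᶜD^α ξ` for `ξ τ = ∂_s φ_s (x τ)|₀`. Differentiating the constant
at `s = 0` gives `∂_x L · ξ + ∂_v L · ᶜD^α ξ = 0`, and the Euler–Lagrange equation replaces
`∂_x L` by `-D^α_{b-} (∂_v L)`.
-/

open Set Function

section Analysis

variable {F : Type*} [NormedAddCommGroup F] [NormedSpace ℝ F]

theorem eqOn_Icc_of_forall_intervalIntegral_eq [CompleteSpace F] {a b : ℝ} (hab : a < b)
    {f g : ℝ → F} (hf : ContinuousOn f (Icc a b)) (hg : ContinuousOn g (Icc a b))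
    (h : ∀ d ∈ Icc a b, ∫ τ in a..d, f τ = ∫ τ in a..d, g τ) :
    EqOn f g (Icc a b) := by
  intro t ht
  have : Fact (t ∈ Icc a b) := ⟨ht⟩
  have hFTC {k : ℝ → F} (hk : ContinuousOn k (Icc a b)) :
      HasDerivWithinAt (fun u => ∫ τ in a..u, k τ) (k t) (Icc a b) t :=
    integral_hasDerivWithinAt_right
      ((hk.mono (uIcc_subset_Icc (left_mem_Icc.mpr hab.le) ht)).intervalIntegrable)
      (hk.stronglyMeasurableAtFilter_nhdsWithin measurableSet_Icc t) (hk t ht)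
  exact (uniqueDiffOn_Icc hab t ht).eq_deriv _ (hFTC hf) ((hFTC hg).congr h (h t ht))

theorem integral_sub_rpow_neg_smul_eq {α a t : ℝ} (hα1 : α < 1) (hat : a ≤ t) (g : ℝ → F) :
    ∫ σ in a..t, (t - σ) ^ (-α) • g σ =
      (1 - α)⁻¹ • ∫ v in 0..(t - a) ^ (1 - α), g (t - v ^ (1 - α)⁻¹) := by
  have h1α : 1 - α ≠ 0 := by linarith
  have hderiv : ∀ σ ∈ Ioo (min a t) (max a t), HasDerivAt (fun σ => (t - σ) ^ (1 - α))
      (-1 * (1 - α) * (t - σ) ^ (1 - α - 1)) σ := by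
    intro σ hσ
    rw [min_eq_left hat, max_eq_right hat] at hσ
    exact ((hasDerivAt_id σ).const_sub t).rpow_const (Or.inl (by simp; linarith [hσ.2]))
  have hsubst := integral_deriv_smul_comp_of_deriv_nonpos
    (f := fun σ => (t - σ) ^ (1 - α)) (g := fun v => g (t - v ^ (1 - α)⁻¹))
    ((continuous_const.sub continuous_id).rpow_const fun _ => Or.inr (by linarith)).continuousOn
    hderiv (fun σ hσ => by
      rw [min_eq_left hat, max_eq_right hat] at hσ
      have := Real.rpow_nonneg (by linarith [hσ.2] : 0 ≤ t - σ) (1 - α - 1)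
      nlinarith)
  have hcongr : ∫ σ in a..t, (-1 * (1 - α) * (t - σ) ^ (1 - α - 1)) •
      g (t - ((t - σ) ^ (1 - α)) ^ (1 - α)⁻¹) =
        -(1 - α) • ∫ σ in a..t, (t - σ) ^ (-α) • g σ := by
    rw [← intervalIntegral.integral_smul]
    refine integral_congr fun σ hσ => ?_
    rw [uIcc_of_le hat] at hσ
    rw [← Real.rpow_mul (by linarith [hσ.2]), mul_inv_cancel₀ h1α, Real.rpow_one,
      show 1 - α - 1 = -α by ring, smul_smul, sub_sub_cancel]
    ring_nf
  simp only [comp_apply, hcongr, sub_self, Real.zero_rpow h1α, integral_symm (0 : ℝ),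
    neg_smul, neg_inj] at hsubst
  rw [← hsubst, smul_smul, inv_mul_cancel₀ h1α, one_smul]

theorem caputoDeriv_eq_integral {α a t : ℝ} (hα1 : α < 1) (hat : a ≤ t) (f : ℝ → F) :
    caputoDeriv α a f t = (Real.Gamma (1 - α))⁻¹ • (1 - α)⁻¹ •
      ∫ v in 0..(t - a) ^ (1 - α), deriv f (t - v ^ (1 - α)⁻¹) := by
  rw [caputoDeriv, integral_sub_rpow_neg_smul_eq hα1 hat]

theorem continuousOn_caputoDeriv {α : ℝ} (hα1 : α < 1) (a : ℝ) {f : ℝ → F}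
    (hf : Continuous (deriv f)) : ContinuousOn (caputoDeriv α a f) (Ici a) := by
  have hq : 0 ≤ (1 - α)⁻¹ := inv_nonneg.mpr (by linarith)
  refine ContinuousOn.congr (Continuous.continuousOn ?_)
    fun t (ht : a ≤ t) => caputoDeriv_eq_integral hα1 ht f
  refine ((continuous_parametric_intervalIntegral_of_continuous
    (f := fun t v => deriv f (t - v ^ (1 - α)⁻¹)) ?_ ?_).const_smul _).const_smul _
  · fun_prop (disch := assumption)
  · exact (continuous_sub_right a).rpow_const fun _ => Or.inr (by linarith)

theorem hasDerivAt_intervalIntegral_of_continuous {W W' : ℝ → ℝ → F}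
    (hW : Continuous (uncurry W)) (hW' : Continuous (uncurry W'))
    (hderiv : ∀ s v, HasDerivAt (W · v) (W' s v) s) (c d s₀ : ℝ) :
    HasDerivAt (fun s => ∫ v in c..d, W s v) (∫ v in c..d, W' s₀ v) s₀ := by
  obtain ⟨C, hC⟩ := ((isCompact_closedBall s₀ 1).prod isCompact_uIcc).exists_bound_of_continuousOn
    hW'.continuousOn
  refine (hasDerivAt_integral_of_dominated_loc_of_deriv_le (bound := fun _ => C)
    (Metric.ball_mem_nhds s₀ one_pos)
    (Filter.Eventually.of_forall fun s => (hW.uncurry_left s).aestronglyMeasurable)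
    ((hW.uncurry_left s₀).intervalIntegrable _ _) (hW'.uncurry_left s₀).aestronglyMeasurable
    (ae_of_all _ fun v hv s hs =>
      hC (s, v) ⟨Metric.ball_subset_closedBall hs, uIoc_subset_uIcc hv⟩)
    intervalIntegrable_const (ae_of_all _ fun v _ s _ => hderiv s v)).2

theorem hasDerivAt_caputoDeriv_of_hasDerivAt_deriv {α a t : ℝ} (hα1 : α < 1) (hat : a ≤ t)
    {f f' : ℝ → ℝ → F} {ξ : ℝ → F} {s₀ : ℝ}
    (hf : Continuous (uncurry fun s => deriv (f s))) (hf' : Continuous (uncurry f'))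
    (hderiv : ∀ s τ, HasDerivAt (fun s => deriv (f s) τ) (f' s τ) s) (hξ : deriv ξ = f' s₀) :
    HasDerivAt (fun s => caputoDeriv α a (f s) t) (caputoDeriv α a ξ t) s₀ := by
  have hq : 0 ≤ (1 - α)⁻¹ := inv_nonneg.mpr (by linarith)
  have hsubst : Continuous fun p : ℝ × ℝ => (p.1, t - p.2 ^ (1 - α)⁻¹) := by
    fun_prop (disch := assumption)
  simp only [caputoDeriv_eq_integral hα1 hat, hξ]
  exact ((hasDerivAt_intervalIntegral_of_continuous
    (W := fun s v => deriv (f s) (t - v ^ (1 - α)⁻¹))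
    (W' := fun s v => f' s (t - v ^ (1 - α)⁻¹))
    (hf.comp hsubst) (hf'.comp hsubst) (fun s v => hderiv s _) _ _ s₀).const_smul _).const_smul _

end Analysis

section Mechanics

variable {E : Type*} [NormedAddCommGroup E] [NormedSpace ℝ E]

theorem hasDerivAt_caputoDeriv_flow {α a t : ℝ} (hα1 : α < 1) (hat : a ≤ t) {φ : ℝ → E → E}
    (hφ : ContDiff ℝ 2 (fun p : ℝ × E => φ p.1 p.2)) {x : ℝ → E} (hx : ContDiff ℝ 1 x)
    (s₀ : ℝ) :
    HasDerivAt (fun s => caputoDeriv α a (fun τ => φ s (x τ)) t)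
      (caputoDeriv α a (fun τ => deriv (fun s => φ s (x τ)) s₀) t) s₀ := by
  set Φ := fun p : ℝ × E => φ p.1 p.2
  have hΦ' : ContDiff ℝ 1 (fderiv ℝ Φ) := hφ.fderiv_right (by norm_num)
  have hΦ'c := hΦ'.continuous
  have hΦ''c : Continuous (fderiv ℝ (fderiv ℝ Φ)) := hΦ'.continuous_fderiv one_ne_zero
  have hxc := hx.continuous
  have hx'c : Continuous (deriv x) := hx.continuous_deriv le_rfl
  have hD (p : ℝ × E) : HasFDerivAt Φ (fderiv ℝ Φ p) p :=
    (hφ.differentiable two_ne_zero p).hasFDerivAt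
  have hD2 (p : ℝ × E) : HasFDerivAt (fderiv ℝ Φ) (fderiv ℝ (fderiv ℝ Φ) p) p :=
    (hΦ'.differentiable one_ne_zero p).hasFDerivAt
  have hcurve (s τ : ℝ) : HasDerivAt (fun τ => (s, x τ)) (0, deriv x τ) τ :=
    (hasDerivAt_const τ s).prodMk (hx.differentiable one_ne_zero τ).hasDerivAt
  have hline (s : ℝ) (y : E) : HasDerivAt (fun s => (s, y)) (1, 0) s :=
    (hasDerivAt_id s).prodMk (hasDerivAt_const s y)
  have hderiv_τ (s : ℝ) :
      deriv (fun τ => φ s (x τ)) = fun τ => fderiv ℝ Φ (s, x τ) (0, deriv x τ) :=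
    funext fun τ => ((hD _).comp_hasDerivAt τ (hcurve s τ)).deriv
  have hderiv_s (y : E) : deriv (fun s => φ s y) s₀ = fderiv ℝ Φ (s₀, y) (1, 0) :=
    ((hD _).comp_hasDerivAt s₀ (hline s₀ y)).deriv
  refine hasDerivAt_caputoDeriv_of_hasDerivAt_deriv hα1 hat
    (f' := fun s τ => fderiv ℝ (fderiv ℝ Φ) (s, x τ) (1, 0) (0, deriv x τ)) ?_ ?_ ?_ ?_
  · simp only [hderiv_τ]
    fun_prop
  · fun_prop
  · intro s τ
    simp only [hderiv_τ]
    simpa using ((hD2 _).comp_hasDerivAt s (hline s (x τ))).clm_apply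
      (hasDerivAt_const s ((0 : ℝ), deriv x τ))
  · funext σ
    simp only [hderiv_s]
    have := ((hD2 _).comp_hasDerivAt σ (hcurve s₀ σ)).clm_apply
      (hasDerivAt_const σ ((1 : ℝ), (0 : E)))
    simp only [comp_apply, map_zero, add_zero] at this
    rw [this.deriv]
    exact hφ.contDiffAt.isSymmSndFDerivAt (by simp) _ _

theorem continuousOn_lagrangian_caputoDeriv {α : ℝ} (hα1 : α < 1) (a : ℝ) {L : ℝ → E → E → ℝ}
    (hL : Continuous (fun p : ℝ × E × E => L p.1 p.2.1 p.2.2)) {y : ℝ → E}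
    (hy : ContDiff ℝ 1 y) :
    ContinuousOn (fun τ => L τ (y τ) (caputoDeriv α a y τ)) (Ici a) :=
  hL.comp_continuousOn <| continuousOn_id.prodMk <| hy.continuous.continuousOn.prodMk <|
    continuousOn_caputoDeriv hα1 a (hy.continuous_deriv le_rfl)

theorem hasDerivAt_lagrangian_comp {L : ℝ → E → E → ℝ} {t s₀ : ℝ} {y v : ℝ → E} {y' v' : E}
    (hL : DifferentiableAt ℝ (fun p : ℝ × E × E => L p.1 p.2.1 p.2.2) (t, y s₀, v s₀))
    (hy : HasDerivAt y y' s₀) (hv : HasDerivAt v v' s₀) :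
    HasDerivAt (fun s => L t (y s) (v s))
      (fderiv ℝ (fun z => L t z (v s₀)) (y s₀) y' +
        fderiv ℝ (fun w => L t (y s₀) w) (v s₀) v') s₀ := by
  have hD := hL.hasFDerivAt
  have hslice_x := (hasFDerivAt_const t (y s₀)).prodMk
    ((hasFDerivAt_id (𝕜 := ℝ) (y s₀)).prodMk (hasFDerivAt_const (v s₀) (y s₀)))
  have hslice_v := (hasFDerivAt_const t (v s₀)).prodMk
    ((hasFDerivAt_const (y s₀) (v s₀)).prodMk (hasFDerivAt_id (𝕜 := ℝ) (v s₀)))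
  have hx := (hD.comp (y s₀) hslice_x).fderiv
  have hw := (hD.comp (v s₀) hslice_v).fderiv
  simp only [comp_def, id_eq] at hx hw
  refine (hD.comp_hasDerivAt s₀ ((hasDerivAt_const s₀ t).prodMk (hy.prodMk hv))).congr_deriv ?_
  rw [hx, hw, ContinuousLinearMap.comp_apply, ContinuousLinearMap.comp_apply, ← map_add]
  simp

end Mechanics

theorem fractional_noether_no_time_change_general
    {E : Type*} [NormedAddCommGroup E] [NormedSpace ℝ E]
    (α a b : ℝ) (hα1 : α < 1) (hab : a < b)
    (L : ℝ → E → E → ℝ)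
    (hL : ContDiff ℝ 2 (fun p : ℝ × E × E => L p.1 p.2.1 p.2.2))
    (φ : ℝ → E → E)
    (hφ : ContDiff ℝ 2 (fun p : ℝ × E => φ p.1 p.2))
    (hφ0 : ∀ y : E, φ 0 y = y)
    (x : ℝ → E) (hx : ContDiff ℝ 1 x)
    (hinv : ∀ s : ℝ, ∀ ta ∈ Set.Icc a b, ∀ tb ∈ Set.Icc a b,
      (∫ t in ta..tb, L t (x t) (caputoDeriv α a x t)) =
        ∫ t in ta..tb, L t (φ s (x t))
          (caputoDeriv α a (fun τ => φ s (x τ)) t))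
    (hEL : ∀ t ∈ Set.Icc a b,
      rlDerivR α b (fun τ => fderiv ℝ (fun v => L τ (x τ) v)
          (caputoDeriv α a x τ)) t +
        fderiv ℝ (fun y => L t y (caputoDeriv α a x t)) (x t) = 0) :
    ∀ t ∈ Set.Icc a b,
      (fderiv ℝ (fun v => L t (x t) v) (caputoDeriv α a x t))
          (caputoDeriv α a (fun τ => deriv (fun s => φ s (x τ)) 0) t) -
        (rlDerivR α b (fun τ => fderiv ℝ (fun v => L τ (x τ) v)
            (caputoDeriv α a x τ)) t)
          (deriv (fun s => φ s (x t)) 0) = 0 := by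
  intro t ht
  have hcont {y : ℝ → E} (hy : ContDiff ℝ 1 y) :
      ContinuousOn (fun τ => L τ (y τ) (caputoDeriv α a y τ)) (Icc a b) :=
    (continuousOn_lagrangian_caputoDeriv hα1 a hL.continuous hy).mono Icc_subset_Ici_self
  have hinv_pointwise (s : ℝ) :
      L t (φ s (x t)) (caputoDeriv α a (fun τ => φ s (x τ)) t) =
        L t (x t) (caputoDeriv α a x t) :=
    (eqOn_Icc_of_forall_intervalIntegral_eq hab (hcont hx)
      (hcont ((hφ.of_le one_le_two).comp (contDiff_const.prodMk hx)))
      (hinv s a (left_mem_Icc.mpr hab.le)) ht).symm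
  have hξ : HasDerivAt (fun s => φ s (x t)) (deriv (fun s => φ s (x t)) 0) 0 :=
    ((hφ.comp (contDiff_id.prodMk contDiff_const)).differentiable two_ne_zero 0).hasDerivAt
  have hchain := hasDerivAt_lagrangian_comp (t := t) (hL.differentiable two_ne_zero _) hξ
    (hasDerivAt_caputoDeriv_flow hα1 ht.1 hφ hx 0)
  simp only [hφ0, hinv_pointwise] at hchain
  have hNoether := hchain.unique (hasDerivAt_const 0 _)
  rw [eq_neg_of_add_eq_zero_left (hEL t ht), neg_apply, sub_neg_eq_add,
    add_comm, hNoether]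

/-- fractional Noether theorem, no time transformation:
if the fractional functional is invariant under a one-parameter group acting
on `x` only, then along every solution of the fractional Euler–Lagrange
equation `D^α_{b-}(∂_v L(★)) + ∂_x L(★) = 0` one has
`∂_v L(★)·ᶜD^α_{a+}( dφ_s(x)/ds|₀ ) − D^α_{b-}(∂_v L(★))·(dφ_s(x)/ds|₀) = 0`. -/
theorem fractional_noether_no_time_change
    {E : Type*} [NormedAddCommGroup E] [NormedSpace ℝ E] [CompleteSpace E]
    (α a b : ℝ) (hα : 0 < α) (hα1 : α < 1) (hab : a < b)
    (L : ℝ → E → E → ℝ)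
    (hL : ContDiff ℝ 2 (fun p : ℝ × E × E => L p.1 p.2.1 p.2.2))
    (φ : ℝ → E → E)
    (hφ : ContDiff ℝ 2 (fun p : ℝ × E => φ p.1 p.2))
    (hφ0 : ∀ y : E, φ 0 y = y)
    (hφgroup : ∀ s s' : ℝ, ∀ y : E, φ (s + s') y = φ s (φ s' y))
    (x : ℝ → E) (hx : ContDiff ℝ 1 x)
    (hinv : ∀ s : ℝ, ∀ ta ∈ Set.Icc a b, ∀ tb ∈ Set.Icc a b,
      (∫ t in ta..tb, L t (x t) (caputoDeriv α a x t)) =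
        ∫ t in ta..tb, L t (φ s (x t))
          (caputoDeriv α a (fun τ => φ s (x τ)) t))
    (hEL : ∀ t ∈ Set.Icc a b,
      rlDerivR α b (fun τ => fderiv ℝ (fun v => L τ (x τ) v)
          (caputoDeriv α a x τ)) t +
        fderiv ℝ (fun y => L t y (caputoDeriv α a x t)) (x t) = 0) :
    ∀ t ∈ Set.Icc a b,
      (fderiv ℝ (fun v => L t (x t) v) (caputoDeriv α a x t))
          (caputoDeriv α a (fun τ => deriv (fun s => φ s (x τ)) 0) t) -
        (rlDerivR α b (fun τ => fderiv ℝ (fun v => L τ (x τ) v)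
            (caputoDeriv α a x τ)) t)
          (deriv (fun s => φ s (x t)) 0) = 0 :=
  fractional_noether_no_time_change_general α a b hα1 hab L hL φ hφ hφ0 x hx hinv hEL
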